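/- The SWAP channel on two qubits cannot be decomposed across the natural bipartition as a finite sum Σ_i α_i C_i^a ⊗ C_i^b where each C_i^a, C_i^b is a unital completely positive map on one qubit and α_i ∈ C. Concretely, any such sum applied to |0⟩⟨0| ⊗ (I/2) yields a state of the form ρ ⊗ (I/2), whereas SWAP maps it to (I/2) ⊗ |0⟩⟨0|, and these differ. -/
import Mathlib


open Kronecker
open scoped ComplexOrder

/-- The ampliation `id_k ⊗ C` of a one-qubit superoperator `C`. -/
def Ampliate (k : ℕ) (C : Matrix (Fin 2) (Fin 2) ℂ →ₗ[ℂ] Matrix (Fin 2) (Fin 2) ℂ)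
    (ρ : Matrix (Fin k × Fin 2) (Fin k × Fin 2) ℂ) :
    Matrix (Fin k × Fin 2) (Fin k × Fin 2) ℂ :=
  Matrix.of fun p q => C (Matrix.of fun a b => ρ (p.1, a) (q.1, b)) p.2 q.2

/-- Complete positivity of a one-qubit superoperator. -/
def IsCP (C : Matrix (Fin 2) (Fin 2) ℂ →ₗ[ℂ] Matrix (Fin 2) (Fin 2) ℂ) : Prop :=
  ∀ (k : ℕ) (ρ : Matrix (Fin k × Fin 2) (Fin k × Fin 2) ℂ),
    ρ.PosSemidef → (Ampliate k C ρ).PosSemidef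

/-- Unitality of a one-qubit superoperator. -/
def IsUnital (C : Matrix (Fin 2) (Fin 2) ℂ →ₗ[ℂ] Matrix (Fin 2) (Fin 2) ℂ) : Prop :=
  C 1 = 1

/-- The two-qubit SWAP unitary. -/
def swapMat : Matrix (Fin 2 × Fin 2) (Fin 2 × Fin 2) ℂ :=
  Matrix.of fun p q => if p.1 = q.2 ∧ p.2 = q.1 then 1 else 0

/-- The projector `|0⟩⟨0|`. -/
def e00 : Matrix (Fin 2) (Fin 2) ℂ := !![1, 0; 0, 0]

/-- The SWAP channel on two qubits cannot be decomposed as a finite sum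
`Σ_i α_i C_i^a ⊗ C_i^b` of tensor products of unital completely positive maps:
any such sum applied to `|0⟩⟨0| ⊗ I/2` keeps the second factor maximally mixed,
whereas SWAP maps it to `I/2 ⊗ |0⟩⟨0|`. -/
theorem swap_channel_no_unital_decomposition :
    ¬ ∃ (L : ℕ) (α : Fin L → ℂ)
        (Ca Cb : Fin L → (Matrix (Fin 2) (Fin 2) ℂ →ₗ[ℂ] Matrix (Fin 2) (Fin 2) ℂ)),
      (∀ i, IsUnital (Ca i) ∧ IsCP (Ca i) ∧ IsUnital (Cb i) ∧ IsCP (Cb i)) ∧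
      swapMat * (e00 ⊗ₖ ((2 : ℂ)⁻¹ • (1 : Matrix (Fin 2) (Fin 2) ℂ))) * swapMat =
        ∑ i, α i • ((Ca i e00) ⊗ₖ (Cb i ((2 : ℂ)⁻¹ • (1 : Matrix (Fin 2) (Fin 2) ℂ)))) := by
  rintro ⟨L, α, Ca, Cb, hprops, heq⟩
  have hCb : ∀ i, Cb i ((2 : ℂ)⁻¹ • (1 : Matrix (Fin 2) (Fin 2) ℂ))
      = (2 : ℂ)⁻¹ • (1 : Matrix (Fin 2) (Fin 2) ℂ) := by
    intro i
    rw [map_smul, (hprops i).2.2.1]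
  have hRHS : ∀ p q : Fin 2 × Fin 2,
      (∑ i, α i • ((Ca i e00) ⊗ₖ (Cb i ((2 : ℂ)⁻¹ • (1 : Matrix (Fin 2) (Fin 2) ℂ))))) p q
      = (∑ i, α i * (Ca i e00) p.1 q.1) * ((2 : ℂ)⁻¹ • (1 : Matrix (Fin 2) (Fin 2) ℂ)) p.2 q.2 := by
    intro p q
    rw [Matrix.sum_apply, Finset.sum_mul]
    refine Finset.sum_congr rfl fun i _ => ?_
    rw [hCb]
    simp [Matrix.kroneckerMap_apply, mul_assoc]
  have h1 := congrFun (congrFun heq ((0, 0) : Fin 2 × Fin 2)) ((0, 0) : Fin 2 × Fin 2)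
  have h2 := congrFun (congrFun heq ((0, 1) : Fin 2 × Fin 2)) ((0, 1) : Fin 2 × Fin 2)
  rw [hRHS] at h1 h2
  have hL1 : (swapMat * (e00 ⊗ₖ ((2 : ℂ)⁻¹ • (1 : Matrix (Fin 2) (Fin 2) ℂ))) * swapMat)
      ((0,0) : Fin 2 × Fin 2) ((0,0) : Fin 2 × Fin 2) = (2 : ℂ)⁻¹ := by
    simp [Matrix.mul_apply, Fintype.sum_prod_type, Fin.sum_univ_succ, swapMat, e00,
      Matrix.one_apply]
  have hL2 : (swapMat * (e00 ⊗ₖ ((2 : ℂ)⁻¹ • (1 : Matrix (Fin 2) (Fin 2) ℂ))) * swapMat)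
      ((0,1) : Fin 2 × Fin 2) ((0,1) : Fin 2 × Fin 2) = 0 := by
    simp [Matrix.mul_apply, Fintype.sum_prod_type, Fin.sum_univ_succ, swapMat, e00,
      Matrix.one_apply]
  rw [hL1] at h1
  rw [hL2] at h2
  simp only [Matrix.smul_apply, Matrix.one_apply_eq, smul_eq_mul, mul_one] at h1 h2
  rw [← h2] at h1
  norm_num at h1
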